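/- For any fixed 0 ≤ k, l ≤ n, the shuffle set S_{k,n−k} decomposes as the disjoint union over all i + j = l with 0 ≤ i ≤ k, 0 ≤ j ≤ n−k of the sets (S_{ij} × S_{k−i,n−k−j})·τ^{ij}_{kn}, where τ^{ij}_{kn} ∈ S_n fixes p for 1 ≤ p ≤ i and k+j+1 ≤ p ≤ n, sends p ↦ p+j for i+1 ≤ p ≤ k, and p ↦ p−k+i for k+1 ≤ p ≤ k+j, and S_{ij} × S_{k−i,n−k−j} is embedded in S_n acting on the first l and last n−l letters respectively. -/

import Mathlib

set_option maxHeartbeats 1000000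
noncomputable section
open Equiv

/-- the set of `(r, n-r)`-shuffles in `S_n` : increasing on the first `r` letters and on the
last `n-r` letters (0-based). -/
def shufSet (n r : ℕ) : Set (Equiv.Perm (Fin n)) :=
  {w | (∀ a b : Fin n, (a : ℕ) < b → (b : ℕ) < r → w a < w b)
    ∧ (∀ a b : Fin n, r ≤ (a : ℕ) → (a : ℕ) < (b : ℕ) → w a < w b)}

/-- the embedding `S_l × S_{n-l} → S_n`, the first factor acting on the first `l` letters,
the second on the last `n-l` letters. -/
def blockPerm (l n : ℕ) (h : l ≤ n) (u : Equiv.Perm (Fin l)) (v : Equiv.Perm (Fin (n-l))) :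
    Equiv.Perm (Fin n) :=
  (finSumFinEquiv.trans (finCongr (by omega : l + (n-l) = n))).permCongr (u.sumCongr v)

/-- the block transposition `χ_{a,b} ∈ S_{a+b}` : `p ↦ p + b` for `p < a`,
`p ↦ p - a` for `a ≤ p`. -/
def chiPerm (a b : ℕ) : Equiv.Perm (Fin (a+b)) :=
  (finAddFlip.trans (finCongr (Nat.add_comm b a)) : Fin (a+b) ≃ Fin (a+b))

/-- embed a permutation of `b` letters into `S_n` acting on positions `a+1, …, a+b`. -/
def embedAt (a b c n : ℕ) (h : a + b + c = n) (p : Equiv.Perm (Fin b)) :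
    Equiv.Perm (Fin n) :=
  ((Equiv.sumCongr (Equiv.refl (Fin a)) (finSumFinEquiv : Fin b ⊕ Fin c ≃ Fin (b+c))).trans
      (finSumFinEquiv.trans (finCongr (by omega : a + (b+c) = n)))).permCongr
    (Equiv.sumCongr (Equiv.refl (Fin a)) (Equiv.sumCongr p (Equiv.refl (Fin c))))

/-- the permutation `τ^{ij}_{kn} ∈ S_n` : identity on `[1,i]` and `[k+j+1, n]`,
`p ↦ p + j` on `(i, k]`, `p ↦ p - (k-i)` on `(k, k+j]` (1-based description). -/
def tauP (i j r n : ℕ) (h1 : i ≤ r) (h2 : r + j ≤ n) : Equiv.Perm (Fin n) :=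
  embedAt i ((r - i) + j) (n - r - j) n (by omega) (chiPerm (r - i) j)

/-!
A shuffle `w ∈ S_{r,n-r}` increases on `[0,r)` and on `[r,n)`, so the letters it sends into `[0,l)`
are an initial segment `[0,i)` of the first block together with an initial segment `[r,r+j)` of the
second, and counting them gives `i + j = l`. The permutation `τ = tauP i j r n` maps exactly these
letters onto `[0,l)`, so `w τ⁻¹` preserves `[0,l)` and is a block permutation `blockPerm u v`.
Reading `blockPerm u v * τ` block by block shows that it is an `(r,n-r)`-shuffle iff `u` is an
`(i,j)`-shuffle and `v` an `(r-i,n-r-j)`-shuffle. For uniqueness, `i` is the number of letters of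
the first block sent into `[0,l)`, and `blockPerm` is injective.
-/

open Finset

theorem val_chiPerm (a b : ℕ) (x : Fin (a + b)) :
    (chiPerm a b x : ℕ) = if (x : ℕ) < a then (x : ℕ) + b else (x : ℕ) - a := by
  rcases x with ⟨x, hx⟩
  split_ifs with h
  · simp [chiPerm, finAddFlip_apply_mk_left h, Nat.add_comm]
  · simp [chiPerm, finAddFlip_apply_mk_right (not_lt.1 h) hx]

theorem val_embedAt {a b c n : ℕ} (h : a + b + c = n) (p : Perm (Fin b)) (x : Fin n) :
    (embedAt a b c n h p x : ℕ) =
      if hx : a ≤ x ∧ (x : ℕ) < a + b then a + (p ⟨x - a, by omega⟩ : ℕ) else x := by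
  obtain ⟨y, rfl⟩ := ((sumCongr (Equiv.refl (Fin a)) finSumFinEquiv).trans
    (finSumFinEquiv.trans (finCongr (by omega : a + (b + c) = n)))).surjective x
  rcases y with y | y | y <;> simp [embedAt]

theorem val_tauP {i j r n : ℕ} (hi : i ≤ r) (hj : r + j ≤ n) (x : Fin n) :
    (tauP i j r n hi hj x : ℕ) =
      if (x : ℕ) < i then (x : ℕ) else if (x : ℕ) < r then (x : ℕ) + j
      else if (x : ℕ) < r + j then (x : ℕ) - (r - i) else (x : ℕ) := by
  simp only [tauP, val_embedAt, val_chiPerm]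
  split_ifs <;> omega

theorem val_tauP_lt_iff {i j r n : ℕ} (hi : i ≤ r) (hj : r + j ≤ n) (x : Fin n) :
    (tauP i j r n hi hj x : ℕ) < i + j ↔ (x : ℕ) < i ∨ r ≤ x ∧ (x : ℕ) < r + j := by
  rw [val_tauP]
  split_ifs <;> omega

theorem val_blockPerm {l n : ℕ} (hl : l ≤ n) (u : Perm (Fin l)) (v : Perm (Fin (n - l)))
    (x : Fin n) :
    (blockPerm l n hl u v x : ℕ) =
      if hx : (x : ℕ) < l then (u ⟨x, hx⟩ : ℕ) else l + (v ⟨x - l, by omega⟩ : ℕ) := by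
  obtain ⟨y, rfl⟩ := (finSumFinEquiv.trans (finCongr (by omega : l + (n - l) = n))).surjective x
  rcases y with y | y <;> simp [blockPerm]

theorem val_blockPerm_lt_iff {l n : ℕ} (hl : l ≤ n) (u : Perm (Fin l)) (v : Perm (Fin (n - l)))
    (x : Fin n) : (blockPerm l n hl u v x : ℕ) < l ↔ (x : ℕ) < l := by
  rw [val_blockPerm]
  split_ifs with hx <;> simp [hx]

theorem blockPerm_inj {l n : ℕ} (hl : l ≤ n) {u u' : Perm (Fin l)}
    {v v' : Perm (Fin (n - l))} :
    blockPerm l n hl u v = blockPerm l n hl u' v' ↔ u = u' ∧ v = v' := by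
  refine ⟨fun h => Prod.ext_iff.1 (?_ : (u, v) = (u', v')), ?_⟩
  · exact ((permCongr _).injective.comp Perm.sumCongrHom_injective : Function.Injective
      (fun p : Perm (Fin l) × Perm (Fin (n - l)) => blockPerm l n hl p.1 p.2)) h
  · rintro ⟨rfl, rfl⟩
    rfl

theorem exists_blockPerm_eq {l n : ℕ} (hl : l ≤ n) (σ : Perm (Fin n))
    (hσ : ∀ x, (σ x : ℕ) < l ↔ (x : ℕ) < l) : ∃ u v, blockPerm l n hl u v = σ := by
  set e := finSumFinEquiv.trans (finCongr (by omega : l + (n - l) = n))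
  have he : ∀ (x : Fin n) (hx : (x : ℕ) < l), Sum.inl ⟨x, hx⟩ = e.symm x := fun x hx => by
    rw [Equiv.eq_symm_apply]
    ext
    simp [e]
  obtain ⟨⟨u, v⟩, huv⟩ : e.symm.permCongr σ ∈ (Perm.sumCongrHom _ _).range := by
    refine Perm.mem_sumCongrHom_range_of_perm_mapsTo_inl ?_
    rintro _ ⟨a, rfl⟩
    refine ⟨_, he _ ((hσ _).2 ?_)⟩
    simp [e]
  refine ⟨u, v, ?_⟩
  change e.permCongr (Perm.sumCongrHom _ _ (u, v)) = σ
  rw [huv, ← permCongr_symm, apply_symm_apply]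

theorem val_blockPerm_mul_tauP {i r l n : ℕ} (hl : l ≤ n) (hi : i ≤ r) (hil : i ≤ l)
    (hjn : r + (l - i) ≤ n) (u : Perm (Fin l)) (v : Perm (Fin (n - l))) (x : Fin n) :
    ((blockPerm l n hl u v * tauP i (l - i) r n hi hjn) x : ℕ) =
      if h₁ : (x : ℕ) < i then (u ⟨x, by omega⟩ : ℕ)
      else if h₂ : (x : ℕ) < r then l + (v ⟨x - i, by omega⟩ : ℕ)
      else if h₃ : (x : ℕ) < r + (l - i) then (u ⟨x - (r - i), by omega⟩ : ℕ)
      else l + (v ⟨x - l, by omega⟩ : ℕ) := by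
  have hτ := val_tauP hi hjn x
  rw [Perm.mul_apply, val_blockPerm]
  generalize tauP i (l - i) r n hi hjn x = y at hτ ⊢
  split_ifs at hτ ⊢ <;> first | omega | (congr 3 <;> simp only [Fin.mk.injEq] <;> omega)

theorem val_blockPerm_mul_tauP_lt_iff {i r l n : ℕ} (hl : l ≤ n) (hi : i ≤ r) (hil : i ≤ l)
    (hjn : r + (l - i) ≤ n) (u : Perm (Fin l)) (v : Perm (Fin (n - l))) (x : Fin n) :
    ((blockPerm l n hl u v * tauP i (l - i) r n hi hjn) x : ℕ) < l ↔
      (x : ℕ) < i ∨ r ≤ x ∧ (x : ℕ) < r + (l - i) := by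
  rw [Perm.mul_apply, val_blockPerm_lt_iff, ← val_tauP_lt_iff, Nat.add_sub_cancel' hil]

theorem blockPerm_mul_tauP_mem_shufSet_iff {i r l n : ℕ} (hl : l ≤ n) (hi : i ≤ r)
    (hil : i ≤ l) (hjn : r + (l - i) ≤ n) (u : Perm (Fin l)) (v : Perm (Fin (n - l))) :
    blockPerm l n hl u v * tauP i (l - i) r n hi hjn ∈ shufSet n r ↔
      u ∈ shufSet l i ∧ v ∈ shufSet (n - l) (r - i) := by
  have hw := val_blockPerm_mul_tauP hl hi hil hjn u v
  constructor
  · rintro ⟨hw₁, hw₂⟩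
    refine ⟨⟨fun a b hab hbi => ?_, fun a b hia hab => ?_⟩,
      fun a b hab hb => ?_, fun a b ha hab => ?_⟩
    · have h := hw₁ ⟨a, by omega⟩ ⟨b, by omega⟩ hab (by dsimp only; omega)
      rw [Fin.lt_def, hw, hw] at h
      dsimp only at h
      split_ifs at h <;> omega
    · have h := hw₂ ⟨a + (r - i), by omega⟩ ⟨b + (r - i), by omega⟩ (by dsimp only; omega)
        (by dsimp only; omega)
      rw [Fin.lt_def, hw, hw] at h
      dsimp only at h
      split_ifs at h <;> first | omega | simpa using h
    · have h := hw₁ ⟨a + i, by omega⟩ ⟨b + i, by omega⟩ (by dsimp only; omega)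
        (by dsimp only; omega)
      rw [Fin.lt_def, hw, hw] at h
      dsimp only at h
      split_ifs at h <;> first | omega | simpa using h
    · have h := hw₂ ⟨a + l, by omega⟩ ⟨b + l, by omega⟩ (by dsimp only; omega)
        (by dsimp only; omega)
      rw [Fin.lt_def, hw, hw] at h
      dsimp only at h
      split_ifs at h <;> first | omega | simpa using h
  · rintro ⟨⟨hu₁, hu₂⟩, ⟨hv₁, hv₂⟩⟩
    refine ⟨fun a b hab hbr => ?_, fun a b hra hab => ?_⟩ <;> rw [Fin.lt_def, hw, hw] <;>
      split_ifs <;>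
      first
      | omega
      | exact hu₁ _ _ (by dsimp only; omega) (by dsimp only; omega)
      | exact hu₂ _ _ (by dsimp only; omega) (by dsimp only; omega)
      | exact Nat.add_lt_add_left (hv₁ _ _ (by dsimp only; omega) (by dsimp only; omega)) l
      | exact Nat.add_lt_add_left (hv₂ _ _ (by dsimp only; omega) (by dsimp only; omega)) l

theorem exists_blockPerm_mul_tauP_eq {i r l n : ℕ} (hl : l ≤ n) (hi : i ≤ r) (hil : i ≤ l)
    (hjn : r + (l - i) ≤ n) (w : Perm (Fin n))
    (hw : ∀ x : Fin n, (w x : ℕ) < l ↔ (x : ℕ) < i ∨ r ≤ x ∧ (x : ℕ) < r + (l - i)) :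
    ∃ u v, blockPerm l n hl u v * tauP i (l - i) r n hi hjn = w := by
  set τ := tauP i (l - i) r n hi hjn
  obtain ⟨u, v, huv⟩ := exists_blockPerm_eq hl (w * τ⁻¹) fun y => by
    obtain ⟨x, rfl⟩ := τ.surjective y
    rw [Perm.mul_apply, Perm.inv_def, symm_apply_apply, hw, ← val_tauP_lt_iff,
      Nat.add_sub_cancel' hil]
  exact ⟨u, v, by rw [huv, inv_mul_cancel_right]⟩

theorem card_filter_perm_val_lt {n l : ℕ} (hl : l ≤ n) (w : Perm (Fin n)) :
    #{x : Fin n | (w x : ℕ) < l} = l := by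
  rw [card_equiv w (t := {y : Fin n | (y : ℕ) < l}) (by simp), Fin.card_filter_val_lt,
    min_eq_right hl]

theorem exists_val_lt_iff_of_mem_shufSet {n r l : ℕ} (hr : r ≤ n) (hl : l ≤ n)
    {w : Perm (Fin n)} (hw : w ∈ shufSet n r) :
    ∃ i, i ≤ r ∧ i ≤ l ∧ r + (l - i) ≤ n ∧
      ∀ x : Fin n, (w x : ℕ) < l ↔ (x : ℕ) < i ∨ r ≤ x ∧ (x : ℕ) < r + (l - i) := by
  obtain ⟨hw₁, hw₂⟩ := hw
  have h_and : ∀ x : Fin n, (x : ℕ) < #{y : Fin n | (y : ℕ) < r ∧ (w y : ℕ) < l} ↔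
      (x : ℕ) < r ∧ (w x : ℕ) < l := fun x =>
    Fin.lt_card_filter_univ_iff_apply_of_imp _ fun a b hba ⟨har, ha⟩ => by
      rcases hba.lt_or_eq with hba | rfl
      · have := hw₁ b a hba har
        omega
      · exact ⟨har, ha⟩
  -- unlike `[r, r + j)` itself, this predicate is downward closed on all of `Fin n`
  have h_or : ∀ x : Fin n, (x : ℕ) < #{y : Fin n | (y : ℕ) < r ∨ (w y : ℕ) < l} ↔
      (x : ℕ) < r ∨ (w x : ℕ) < l := fun x =>
    Fin.lt_card_filter_univ_iff_apply_of_imp _ fun a b hba ha => by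
      rcases hba.lt_or_eq with hba | rfl
      · by_cases hbr : (b : ℕ) < r
        · exact .inl hbr
        · have := hw₂ b a (by omega) hba
          omega
      · exact ha
  have h_count := card_union_add_card_inter {y : Fin n | (y : ℕ) < r} {y | (w y : ℕ) < l}
  rw [← filter_or, ← filter_and, Fin.card_filter_val_lt, min_eq_right hr,
    card_filter_perm_val_lt hl w] at h_count
  have h_and_r : #{y : Fin n | (y : ℕ) < r ∧ (w y : ℕ) < l} ≤ r :=
    calc _ ≤ #{y : Fin n | (y : ℕ) < r} :=
          card_le_card (monotone_filter_right _ fun _ _ => And.left)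
      _ = r := by rw [Fin.card_filter_val_lt, min_eq_right hr]
  have h_and_l : #{y : Fin n | (y : ℕ) < r ∧ (w y : ℕ) < l} ≤ l :=
    calc _ ≤ #{y : Fin n | (w y : ℕ) < l} :=
          card_le_card (monotone_filter_right _ fun _ _ => And.right)
      _ = l := card_filter_perm_val_lt hl w
  have h_or_n : #{y : Fin n | (y : ℕ) < r ∨ (w y : ℕ) < l} ≤ n := by
    simpa using card_le_univ (α := Fin n) {y : Fin n | (y : ℕ) < r ∨ (w y : ℕ) < l}
  refine ⟨_, h_and_r, h_and_l, by omega, fun x => ?_⟩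
  have := h_and x
  have := h_or x
  omega

theorem card_filter_val_lt_and_val_lt {n r l i j : ℕ} (hr : r ≤ n) (hi : i ≤ r)
    {w : Perm (Fin n)} (hw : ∀ x : Fin n, (w x : ℕ) < l ↔ (x : ℕ) < i ∨ r ≤ x ∧ (x : ℕ) < r + j) :
    #{x : Fin n | (x : ℕ) < r ∧ (w x : ℕ) < l} = i := by
  rw [← min_eq_right (hi.trans hr), ← Fin.card_filter_val_lt]
  congr 1
  ext x
  simp only [mem_filter, mem_univ, true_and, hw]
  omega

theorem blockPerm_mul_tauP_inj {i i' r l n : ℕ} (hr : r ≤ n) (hl : l ≤ n)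
    (hi : i ≤ r) (hil : i ≤ l) (hjn : r + (l - i) ≤ n)
    (hi' : i' ≤ r) (hil' : i' ≤ l) (hjn' : r + (l - i') ≤ n)
    {u u' : Perm (Fin l)} {v v' : Perm (Fin (n - l))}
    (h : blockPerm l n hl u v * tauP i (l - i) r n hi hjn =
      blockPerm l n hl u' v' * tauP i' (l - i') r n hi' hjn') :
    i = i' ∧ u = u' ∧ v = v' := by
  obtain rfl : i = i' := by
    have h_card := card_filter_val_lt_and_val_lt hr hi
      (val_blockPerm_mul_tauP_lt_iff hl hi hil hjn u v)
    rwa [h, card_filter_val_lt_and_val_lt hr hi'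
      (val_blockPerm_mul_tauP_lt_iff hl hi' hil' hjn' u' v'), eq_comm] at h_card
  exact ⟨rfl, (blockPerm_inj hl).1 (mul_right_cancel h)⟩

theorem shuffle_decomposition
    (n r l : ℕ) (hr : r ≤ n) (hl : l ≤ n) :
    -- the factorization predicate :
    let Fact : Equiv.Perm (Fin n) → (ℕ × Equiv.Perm (Fin l) × Equiv.Perm (Fin (n-l))) → Prop :=
      fun w t => ∃ (hik : t.1 ≤ r) (hjk : r + (l - t.1) ≤ n), t.1 ≤ l
        ∧ t.2.1 ∈ shufSet l t.1
        ∧ t.2.2 ∈ shufSet (n-l) (r - t.1)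
        ∧ w = blockPerm l n hl t.2.1 t.2.2 * tauP t.1 (l - t.1) r n hik hjk
    -- every `(r,n-r)`-shuffle factors uniquely :
    (∀ w ∈ shufSet n r, ∃! t, Fact w t)
    -- and every such product is an `(r,n-r)`-shuffle :
    ∧ (∀ w t, Fact w t → w ∈ shufSet n r) := by
  intro Fact
  refine ⟨fun w hw => ?_, ?_⟩
  · obtain ⟨i, hir, hil, hjn, hw_lt⟩ := exists_val_lt_iff_of_mem_shufSet hr hl hw
    obtain ⟨u, v, rfl⟩ := exists_blockPerm_mul_tauP_eq hl hir hil hjn w hw_lt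
    obtain ⟨hu, hv⟩ := (blockPerm_mul_tauP_mem_shufSet_iff hl hir hil hjn u v).1 hw
    refine ⟨(i, u, v), ⟨hir, hjn, hil, hu, hv, rfl⟩, ?_⟩
    rintro ⟨i', u', v'⟩ ⟨hir', hjn', hil', -, -, h_eq⟩
    obtain ⟨rfl, rfl, rfl⟩ := blockPerm_mul_tauP_inj hr hl hir' hil' hjn' hir hil hjn h_eq.symm
    rfl
  · rintro w ⟨i, u, v⟩ ⟨hir, hjn, hil, hu, hv, rfl⟩
    exact (blockPerm_mul_tauP_mem_shufSet_iff hl hir hil hjn u v).2 ⟨hu, hv⟩
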